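/- Adversary counting lemma: suppose the codemaker answers each guess with the greedy strategy (scanning positions left to right, answering ✗ whenever the set of permutations consistent with all feedback so far remains nonempty, otherwise ✓). Then after any number r of rounds, the number of permutations of {1,…,n} consistent with all feedback equals the permanent of the tracking matrix A^{(r)}, where a^{(r)}_{ij} = 0 iff in some round ≤ r the guess had value j at position i and received answer ✗, and a^{(r)}_{ij} = 1 otherwise. -/

import Mathlib

/-!
A permutation contributes `1` to the permanent of the 0/1 tracking matrix if it avoids every
cell that received ✗, and `0` otherwise; consistent permutations avoid these cells. Conversely,
let `σ` avoid all ✗ cells. The greedy codemaker answers ✓ at a position only when answering ✗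
there would leave no permutation consistent with the history and the answers already given in
that round; scanning the positions left to right, `σ` agrees with the earlier answers, so if it
missed that ✓ it would itself be such a permutation. Hence `σ` meets every ✓ as well, and the
consistent permutations are exactly those counted by the permanent.
-/

attribute [local instance] Classical.propDecidable

namespace PG

variable {n : ℕ}

/-- Per-position exact-match feedback: `true` (✓) at `i` iff `x i = y i`. -/
def tau (x y : Fin n → Fin n) (i : Fin n) : Bool := decide (x i = y i)

/-- A codebreaker strategy in the permutation game. -/
def PStrategy (n : ℕ) : Type :=
  List (Fin n → Bool) → (Fin n → Fin n)

/-- Feedback history after `r` rounds against secret `y`. -/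
def phist (S : PStrategy n) (y : Fin n → Fin n) : ℕ → List (Fin n → Bool)
  | 0 => []
  | r + 1 => phist S y r ++ [tau (S (phist S y r)) y]

/-- The guess in round `r` (0-indexed). -/
def pguess (S : PStrategy n) (y : Fin n → Fin n) (r : ℕ) : Fin n → Fin n :=
  S (phist S y r)

/-- `S` wins within `m` rounds: for every secret permutation, some guess among
the first `m` equals the secret. -/
def PWinsIn (S : PStrategy n) (m : ℕ) : Prop :=
  ∀ y : Equiv.Perm (Fin n), ∃ r < m, pguess S (⇑y) r = ⇑y

/-- `Gnum n`: the optimal worst-case number of rounds needed to guess a secret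
permutation of `{1,…,n}` with per-position ✓/✗ feedback. -/
noncomputable def Gnum (n : ℕ) : ℕ :=
  sInf {m | ∃ S : PStrategy n, PWinsIn S m}

/-- A history of (guess, feedback) pairs. -/
abbrev Hist (n : ℕ) := List ((Fin n → Fin n) × (Fin n → Bool))

/-- A permutation is consistent with a history iff it satisfies every asserted
equality (✓) and inequality (✗). -/
def Consistent (H : Hist n) (σ : Equiv.Perm (Fin n)) : Prop :=
  ∀ p ∈ H, ∀ i : Fin n, if p.2 i then p.1 i = σ i else p.1 i ≠ σ i

/-- A permutation satisfies a partial feedback list `g` (on the first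
`g.length` positions) for guess `x`. -/
def PrefixOK (x : Fin n → Fin n) (g : List Bool) (σ : Equiv.Perm (Fin n)) : Prop :=
  ∀ (j : ℕ) (hg : j < g.length) (hn : j < n),
    if g.get ⟨j, hg⟩ then x ⟨j, hn⟩ = σ ⟨j, hn⟩ else x ⟨j, hn⟩ ≠ σ ⟨j, hn⟩

/-- Greedy adversary feedback on the first `j` positions: scanning left to
right, answer ✗ whenever some permutation consistent with the history and the
partial feedback so far remains, otherwise ✓. -/
noncomputable def greedyAux (H : Hist n) (x : Fin n → Fin n) : ℕ → List Bool
  | 0 => []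
  | j + 1 =>
    greedyAux H x j ++
      [if ∃ σ : Equiv.Perm (Fin n),
          Consistent H σ ∧ PrefixOK x (greedyAux H x j ++ [false]) σ
        then false else true]

/-- The full greedy feedback vector for guess `x` given history `H`. -/
noncomputable def gfb (H : Hist n) (x : Fin n → Fin n) (i : Fin n) : Bool :=
  (greedyAux H x n).getD i.val true

/-- The history after `r` rounds when the guesses are `xs 0, xs 1, …` and the
codemaker answers greedily. -/
noncomputable def greedyHist (xs : ℕ → Fin n → Fin n) : ℕ → Hist n
  | 0 => []
  | r + 1 => greedyHist xs r ++ [(xs r, gfb (greedyHist xs r) (xs r))]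

/-- The 0/1 tracking matrix of a history: entry `(i, j)` is `0` iff some guess
placed value `j` at position `i` and received answer ✗. -/
noncomputable def track (H : Hist n) : Matrix (Fin n) (Fin n) ℕ :=
  fun i j => if ∃ p ∈ H, p.1 i = j ∧ p.2 i = false then 0 else 1

end PG


/-- The permanent of a square matrix over ℕ. -/
noncomputable def pm {n : ℕ} (A : Matrix (Fin n) (Fin n) ℕ) : ℕ :=
  ∑ σ : Equiv.Perm (Fin n), ∏ i, A i (σ i)

theorem pm_eq_card_filter {n : ℕ} {A : Matrix (Fin n) (Fin n) ℕ} (hA : ∀ i j, A i j ≤ 1) :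
    pm A = (Finset.univ.filter fun σ : Equiv.Perm (Fin n) => ∀ i, A i (σ i) = 1).card := by
  rw [Finset.card_filter, pm]
  refine Finset.sum_congr rfl fun σ _ => ?_
  split_ifs with h
  · exact Finset.prod_eq_one fun i _ => h i
  · push Not at h
    obtain ⟨i, hi⟩ := h
    exact Finset.prod_eq_zero (Finset.mem_univ i) (by have := hA i (σ i); omega)

namespace PG

variable {n : ℕ}

theorem track_le_one (H : Hist n) (i j : Fin n) : track H i j ≤ 1 := by
  unfold track
  split_ifs <;> omega

theorem track_eq_one_iff {H : Hist n} {i j : Fin n} :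
    track H i j = 1 ↔ ∀ p ∈ H, p.1 i = j → p.2 i = true := by
  simp [track]

theorem Consistent.track_eq_one {H : Hist n} {σ : Equiv.Perm (Fin n)} (h : Consistent H σ)
    (i : Fin n) : track H i (σ i) = 1 := by
  refine track_eq_one_iff.2 fun p hp hpi => ?_
  have := h p hp i
  split_ifs at this with hb
  · exact hb
  · exact absurd hpi this

theorem PrefixOK.append_singleton {x : Fin n → Fin n} {g : List Bool} {b : Bool}
    {σ : Equiv.Perm (Fin n)} (hg : PrefixOK x g σ)
    (hb : ∀ hn : g.length < n, if b then x ⟨_, hn⟩ = σ ⟨_, hn⟩ else x ⟨_, hn⟩ ≠ σ ⟨_, hn⟩) :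
    PrefixOK x (g ++ [b]) σ := by
  intro j hj hn
  rcases Nat.lt_or_ge j g.length with hj' | hj'
  · simpa [List.getElem_append_left hj'] using hg j hj' hn
  · obtain rfl : j = g.length := by simp at hj; omega
    simpa using hb hn

section Greedy

variable (H : Hist n) (x : Fin n → Fin n)

noncomputable def greedyBit (j : ℕ) : Bool :=
  if ∃ σ : Equiv.Perm (Fin n), Consistent H σ ∧ PrefixOK x (greedyAux H x j ++ [false]) σ
  then false else true

theorem greedyAux_eq_map_range (m : ℕ) :
    greedyAux H x m = (List.range m).map (greedyBit H x) := by
  induction m with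
  | zero => rfl
  | succ m ih => rw [greedyAux, List.range_succ, List.map_append, ← ih]; rfl

theorem gfb_eq_greedyBit (i : Fin n) : gfb H x i = greedyBit H x i := by
  simp [gfb, greedyAux_eq_map_range]

theorem prefixOK_greedyAux {σ : Equiv.Perm (Fin n)} (m : ℕ)
    (h : ∀ i : Fin n, i.val < m → if gfb H x i then x i = σ i else x i ≠ σ i) :
    PrefixOK x (greedyAux H x m) σ := by
  intro j hj hn
  simp only [greedyAux_eq_map_range, List.length_map, List.length_range] at hj
  simpa [greedyAux_eq_map_range, gfb_eq_greedyBit] using h ⟨j, hn⟩ hj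

theorem gfb_agrees_of_avoids {σ : Equiv.Perm (Fin n)} (hσ : Consistent H σ)
    (havoid : ∀ i, gfb H x i = false → x i ≠ σ i) (i : Fin n) :
    if gfb H x i then x i = σ i else x i ≠ σ i := by
  induction i using WellFoundedLT.induction with
  | _ i ih =>
    cases hb : gfb H x i with
    | false => simpa using havoid i hb
    | true =>
      simp only [if_true]
      by_contra hne
      have hwitness : PrefixOK x (greedyAux H x i ++ [false]) σ :=
        (prefixOK_greedyAux H x i fun j hj => ih j hj).append_singleton
          fun _ => by simpa [greedyAux_eq_map_range] using hne
      rw [gfb_eq_greedyBit, greedyBit, if_pos ⟨σ, hσ, hwitness⟩] at hb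
      exact Bool.false_ne_true hb

theorem consistent_append_gfb {σ : Equiv.Perm (Fin n)} (hσ : Consistent H σ)
    (havoid : ∀ i, gfb H x i = false → x i ≠ σ i) :
    Consistent (H ++ [(x, gfb H x)]) σ := by
  intro p hp
  rcases List.mem_append.mp hp with hp | hp
  · exact hσ p hp
  · obtain rfl := List.mem_singleton.mp hp
    exact gfb_agrees_of_avoids H x hσ havoid

end Greedy

theorem consistent_greedyHist_of_track_eq_one {xs : ℕ → Fin n → Fin n} {σ : Equiv.Perm (Fin n)} :
    ∀ {r}, (∀ i, track (greedyHist xs r) i (σ i) = 1) → Consistent (greedyHist xs r) σ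
  | 0, _ => fun _ hp => absurd hp List.not_mem_nil
  | r + 1, h => by
    simp only [greedyHist, track_eq_one_iff, List.mem_append, List.mem_singleton] at h
    refine consistent_append_gfb _ _ (consistent_greedyHist_of_track_eq_one fun i => ?_) ?_
    · exact track_eq_one_iff.2 fun p hp => h i p (Or.inl hp)
    · intro i hfalse hxi
      simpa [hfalse] using h i _ (Or.inr rfl) hxi

theorem consistent_greedyHist_iff {xs : ℕ → Fin n → Fin n} {r : ℕ} {σ : Equiv.Perm (Fin n)} :
    Consistent (greedyHist xs r) σ ↔ ∀ i, track (greedyHist xs r) i (σ i) = 1 :=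
  ⟨Consistent.track_eq_one, consistent_greedyHist_of_track_eq_one⟩

end PG

/-- Adversary counting lemma: against the greedy codemaker, after any number
`r` of rounds the number of consistent permutations equals the permanent of
the tracking matrix. -/
theorem stmt10 (n : ℕ) (xs : ℕ → Fin n → Fin n) (r : ℕ) :
    (Finset.univ.filter
      (fun σ : Equiv.Perm (Fin n) => PG.Consistent (PG.greedyHist xs r) σ)).card
      = pm (PG.track (PG.greedyHist xs r)) := by
  simp only [pm_eq_card_filter (PG.track_le_one _), PG.consistent_greedyHist_iff]
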